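/- arXiv:math/0308255 — 2 statements merged into one kernel-verified Lean document; each statement's English description precedes it below -/
import Mathlib

section
/- For any element g of a Coxeter group (G,S) with S finite, the word length of g with respect to S equals the number of reflections t (conjugates of elements of S) such that the length of t·g is strictly less than the length of g. -/
namespace CoxeterAux

open List
open scoped Classical

variable {B W : Type*} [Group W] {M : CoxeterMatrix B} (cs : CoxeterSystem M W)

/-- The basic sign-flipping function on `W × ℤˣ` attached to a simple reflection. -/
noncomputable def nFun (i : B) : W × ℤˣ → W × ℤˣ :=
  fun x => (cs.simple i * x.1 * cs.simple i, if x.1 = cs.simple i then -x.2 else x.2)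

lemma nFun_involutive (i : B) : Function.Involutive (nFun cs i) := by
  rintro ⟨t, ε⟩
  simp only [nFun]
  by_cases h : t = cs.simple i
  · subst h
    simp [mul_assoc, cs.simple_mul_simple_cancel_left, cs.simple_mul_simple_self]
  · have h2 : cs.simple i * t * cs.simple i ≠ cs.simple i := by
      intro hc
      apply h
      have := congrArg (fun z => cs.simple i * z * cs.simple i) hc
      simpa [mul_assoc, cs.simple_mul_simple_cancel_left, cs.simple_mul_simple_self,
        cs.simple_mul_simple_cancel_right] using this
    simp only [if_neg h, if_neg h2]
    ext
    · simp [mul_assoc, cs.simple_mul_simple_cancel_left, cs.simple_mul_simple_self]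
    · rfl

/-- The permutation of `W × ℤˣ` attached to a simple reflection. -/
noncomputable def nPerm (i : B) : Equiv.Perm (W × ℤˣ) := (nFun_involutive cs i).toPerm

lemma nPerm_apply (i : B) (t : W) (ε : ℤˣ) :
    nPerm cs i (t, ε) =
      (cs.simple i * t * cs.simple i, if t = cs.simple i then -ε else ε) := by
  simp [nPerm, nFun]

lemma apply_prod (ω : List B) (t : W) (ε : ℤˣ) :
    ((ω.map (nPerm cs)).prod) (t, ε) =
      (cs.wordProd ω * t * (cs.wordProd ω)⁻¹,
        (-1 : ℤˣ) ^ ((cs.rightInvSeq ω).count t) * ε) := by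
  induction ω with
  | nil => simp
  | cons i ω ih =>
    have hris : cs.rightInvSeq (i :: ω) =
        ((cs.wordProd ω)⁻¹ * cs.simple i * cs.wordProd ω) :: cs.rightInvSeq ω := rfl
    rw [map_cons, prod_cons, Equiv.Perm.mul_apply, ih, nPerm_apply, hris, count_cons,
      cs.wordProd_cons]
    simp only [beq_iff_eq]
    by_cases h : cs.wordProd ω * t * (cs.wordProd ω)⁻¹ = cs.simple i
    · have h' : (cs.wordProd ω)⁻¹ * cs.simple i * cs.wordProd ω = t := by
        rw [← h]; group
      rw [if_pos h, if_pos h']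
      ext
      · simp [mul_assoc, mul_inv_rev, cs.inv_simple]
      · simp [pow_succ]
    · have h' : (cs.wordProd ω)⁻¹ * cs.simple i * cs.wordProd ω ≠ t := by
        intro hc
        apply h
        rw [← hc]; group
      rw [if_neg h, if_neg h']
      ext
      · simp [mul_assoc, mul_inv_rev, cs.inv_simple]
      · simp


lemma drop_alternatingWord (i i' : B) (m k : ℕ) :
    (CoxeterSystem.alternatingWord i i' m).drop k = CoxeterSystem.alternatingWord i i' (m - k) := by
  induction m generalizing k with
  | zero => simp [CoxeterSystem.alternatingWord]
  | succ m ih =>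
    cases k with
    | zero => simp
    | succ k =>
      rw [CoxeterSystem.alternatingWord_succ', List.drop_succ_cons, ih k]
      congr 1
      omega

lemma get?_alternatingWord (i i' : B) (m j : ℕ) (h : j < m) :
    (CoxeterSystem.alternatingWord i i' m)[j]? =
      some (if Even (m - 1 - j) then i' else i) := by
  induction m generalizing j with
  | zero => omega
  | succ m ih =>
    rw [CoxeterSystem.alternatingWord_succ']
    cases j with
    | zero => simp
    | succ j =>
      rw [List.getElem?_cons_succ, show m + 1 - 1 - (j + 1) = m - 1 - j from by omega]
      exact ih j (by omega)

lemma simple_conj_pow (i i' : B) (c : ℕ) :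
    cs.simple i' * (cs.simple i * cs.simple i') ^ c =
      ((cs.simple i * cs.simple i') ^ c)⁻¹ * cs.simple i' := by
  have h0 : cs.simple i' * (cs.simple i * cs.simple i') * (cs.simple i')⁻¹ =
      (cs.simple i * cs.simple i')⁻¹ := by
    rw [cs.inv_simple, mul_inv_rev, cs.inv_simple, cs.inv_simple]
    simp [mul_assoc, cs.simple_mul_simple_cancel_right, cs.simple_mul_simple_cancel_left]
  have h1 : cs.simple i' * (cs.simple i * cs.simple i') ^ c * (cs.simple i')⁻¹ =
      ((cs.simple i * cs.simple i') ^ c)⁻¹ := by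
    rw [← inv_pow, ← h0, conj_pow]
  calc cs.simple i' * (cs.simple i * cs.simple i') ^ c
      = (cs.simple i' * (cs.simple i * cs.simple i') ^ c * (cs.simple i')⁻¹) * cs.simple i' := by
        group
    _ = ((cs.simple i * cs.simple i') ^ c)⁻¹ * cs.simple i' := by rw [h1]

lemma ris_getD_alternatingWord (i i' : B) (n j : ℕ) (hj : j < 2 * n) :
    (cs.rightInvSeq (CoxeterSystem.alternatingWord i i' (2 * n))).getD j 1 =
      ((cs.simple i * cs.simple i') ^ (2 * n - 1 - j))⁻¹ * cs.simple i' := by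
  rw [cs.getD_rightInvSeq, drop_alternatingWord, get?_alternatingWord i i' _ j hj]
  have hd : 2 * n - (j + 1) = 2 * n - 1 - j := by omega
  rw [hd]
  set d := 2 * n - 1 - j with hdd
  simp only [Option.map_some, Option.getD_some]
  rw [cs.prod_alternatingWord_eq_mul_pow]
  rcases Nat.even_or_odd d with he | ho
  · obtain ⟨c, hc⟩ := he
    have h2 : d / 2 = c := by omega
    rw [if_pos ⟨c, hc⟩, if_pos ⟨c, hc⟩, h2, one_mul]
    calc ((cs.simple i * cs.simple i') ^ c)⁻¹ * cs.simple i' * (cs.simple i * cs.simple i') ^ c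
        = ((cs.simple i * cs.simple i') ^ c)⁻¹ * (cs.simple i' * (cs.simple i * cs.simple i') ^ c) := by
          rw [mul_assoc]
      _ = ((cs.simple i * cs.simple i') ^ c)⁻¹ * (((cs.simple i * cs.simple i') ^ c)⁻¹ * cs.simple i') := by
          rw [simple_conj_pow]
      _ = ((cs.simple i * cs.simple i') ^ d)⁻¹ * cs.simple i' := by
          rw [hc, ← two_mul, pow_mul', pow_two, mul_inv_rev, mul_assoc]
  · have hne : ¬ Even d := Nat.not_even_iff_odd.mpr ho
    obtain ⟨c, hc⟩ := ho
    have h2 : d / 2 = c := by omega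
    rw [if_neg hne, if_neg hne, h2]
    rw [mul_inv_rev]
    calc ((cs.simple i * cs.simple i') ^ c)⁻¹ * (cs.simple i')⁻¹ * cs.simple i *
          (cs.simple i' * (cs.simple i * cs.simple i') ^ c)
        = ((cs.simple i * cs.simple i') ^ c)⁻¹ *
            ((cs.simple i')⁻¹ * cs.simple i * cs.simple i' * (cs.simple i * cs.simple i') ^ c) := by
          group
      _ = ((cs.simple i * cs.simple i') ^ c)⁻¹ *
            ((cs.simple i * cs.simple i')⁻¹ * (cs.simple i' * (cs.simple i * cs.simple i') ^ c)) := by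
          congr 1
          rw [cs.inv_simple, mul_inv_rev, cs.inv_simple, cs.inv_simple]
          group
      _ = ((cs.simple i * cs.simple i') ^ c)⁻¹ *
            ((cs.simple i * cs.simple i')⁻¹ * (((cs.simple i * cs.simple i') ^ c)⁻¹ * cs.simple i')) := by
          rw [simple_conj_pow]
      _ = ((cs.simple i * cs.simple i') ^ d)⁻¹ * cs.simple i' := by
          rw [hc, ← inv_pow, ← inv_pow, ← mul_assoc, ← mul_assoc, ← pow_succ,
            ← pow_add]
          congr 2
          omega


lemma ris_alternatingWord_eq_double (i i' : B) :
    cs.rightInvSeq (CoxeterSystem.alternatingWord i i' (2 * M i i')) =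
      ((List.range (M i i')).map
        (fun j => ((cs.simple i * cs.simple i') ^ (M i i' - 1 - j))⁻¹ * cs.simple i')) ++
      ((List.range (M i i')).map
        (fun j => ((cs.simple i * cs.simple i') ^ (M i i' - 1 - j))⁻¹ * cs.simple i')) := by
  apply List.ext_getElem
  · simp [CoxeterSystem.length_alternatingWord]
    try omega
  intro j h1 h2
  rw [← List.getD_eq_getElem _ 1 h1]
  rw [cs.length_rightInvSeq, CoxeterSystem.length_alternatingWord] at h1
  rw [ris_getD_alternatingWord cs i i' (M i i') j h1]
  rcases lt_or_ge j (M i i') with hlt | hge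
  · rw [List.getElem_append_left (by simpa using hlt)]
    rw [List.getElem_map, List.getElem_range]
    have hexp : 2 * M i i' - 1 - j = M i i' + (M i i' - 1 - j) := by omega
    rw [hexp, pow_add, cs.simple_mul_simple_pow i i', one_mul]
  · rw [List.getElem_append_right (by simpa using hge)]
    rw [List.getElem_map, List.getElem_range]
    congr 3
    simp only [List.length_map, List.length_range]
    omega

lemma count_ris_alternatingWord_even (i i' : B) (t : W) :
    Even ((cs.rightInvSeq (CoxeterSystem.alternatingWord i i' (2 * M i i'))).count t) := by
  rw [ris_alternatingWord_eq_double, List.count_append]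
  exact ⟨_, rfl⟩

lemma prod_map_alternating (i i' : B) (m : ℕ) :
    ((CoxeterSystem.alternatingWord i i' (2 * m)).map (nPerm cs)).prod =
      (nPerm cs i * nPerm cs i') ^ m := by
  induction m with
  | zero => simp [CoxeterSystem.alternatingWord]
  | succ m ih =>
    have hrw : CoxeterSystem.alternatingWord i i' (2 * (m + 1)) =
        i :: i' :: CoxeterSystem.alternatingWord i i' (2 * m) := by
      rw [show 2 * (m + 1) = (2 * m + 1) + 1 from by ring, CoxeterSystem.alternatingWord_succ',
        CoxeterSystem.alternatingWord_succ']
      rw [if_neg (by simp [Nat.even_add_one]), if_pos ⟨m, two_mul m⟩]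
    rw [hrw, List.map_cons, List.map_cons, List.prod_cons, List.prod_cons, ih, pow_succ',
      mul_assoc]

lemma nPerm_liftable : M.IsLiftable (nPerm cs) := by
  intro i i'
  apply Equiv.ext
  rintro ⟨t, ε⟩
  rw [← prod_map_alternating, apply_prod]
  have hπ : cs.wordProd (CoxeterSystem.alternatingWord i i' (2 * M i i')) = 1 := by
    rw [cs.prod_alternatingWord_eq_mul_pow, if_pos ⟨M i i', two_mul _⟩, one_mul,
      Nat.mul_div_cancel_left _ (by norm_num), cs.simple_mul_simple_pow i i']
  obtain ⟨c, hc⟩ := count_ris_alternatingWord_even cs i i' t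
  rw [hπ, hc, Equiv.Perm.one_apply]
  simp [← two_mul, pow_mul]

/-- The sign homomorphism into permutations of `W × ℤˣ`. -/
noncomputable def phi : W →* Equiv.Perm (W × ℤˣ) := cs.lift ⟨nPerm cs, nPerm_liftable cs⟩

lemma phi_simple (i : B) : phi cs (cs.simple i) = nPerm cs i := cs.lift_apply_simple _ i

lemma phi_wordProd (ω : List B) : phi cs (cs.wordProd ω) = (ω.map (nPerm cs)).prod := by
  rw [CoxeterSystem.wordProd, map_list_prod, List.map_map]
  exact congrArg List.prod (List.map_congr_left (fun i _ => phi_simple cs i))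

lemma phi_apply_word (ω : List B) (t : W) (ε : ℤˣ) :
    phi cs (cs.wordProd ω) (t, ε) =
      (cs.wordProd ω * t * (cs.wordProd ω)⁻¹,
        (-1 : ℤˣ) ^ ((cs.rightInvSeq ω).count t) * ε) := by
  rw [phi_wordProd, apply_prod]

lemma phi_refl_apply_self {t : W} (ht : cs.IsReflection t) : ∀ ε : ℤˣ,
    phi cs t (t, ε) = (t, -ε) := by
  obtain ⟨u, i, rfl⟩ := ht
  induction u using cs.simple_induction_left with
  | one =>
    intro ε
    simp only [one_mul, inv_one, mul_one]
    rw [phi_simple, nPerm_apply]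
    simp [cs.simple_mul_simple_cancel_left, cs.simple_mul_simple_self]
  | mul_simple_left u i' hu =>
    intro ε
    set t' := u * cs.simple i * u⁻¹ with ht'
    have key : cs.simple i' * u * cs.simple i * (cs.simple i' * u)⁻¹ =
        cs.simple i' * t' * cs.simple i' := by
      rw [ht', mul_inv_rev, cs.inv_simple]
      group
    rw [key]
    set T := cs.simple i' * t' * cs.simple i' with hT
    have hback : cs.simple i' * T * cs.simple i' = t' := by
      rw [hT]
      simp [mul_assoc, cs.simple_mul_simple_cancel_left, cs.simple_mul_simple_cancel_right,
        cs.simple_mul_simple_self]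
    by_cases h : t' = cs.simple i'
    · have hTT : T = cs.simple i' := by
        rw [hT, h]
        simp [mul_assoc, cs.simple_mul_simple_cancel_left, cs.simple_mul_simple_self]
      rw [hTT, phi_simple, nPerm_apply, if_pos rfl]
      simp [mul_assoc, cs.simple_mul_simple_cancel_left, cs.simple_mul_simple_self]
    · have hTne : T ≠ cs.simple i' := by
        intro hc
        apply h
        rw [← hback, hc]
        simp [mul_assoc, cs.simple_mul_simple_cancel_left, cs.simple_mul_simple_self]
      have e1 : phi cs (cs.simple i') (T, ε) = (t', ε) := by
        rw [phi_simple, nPerm_apply, if_neg hTne, hback]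
      have e2 : phi cs t' (t', ε) = (t', -ε) := hu ε
      have e3 : phi cs (cs.simple i') (t', -ε) = (T, -ε) := by
        rw [phi_simple, nPerm_apply, if_neg h, hT]
      have comp : phi cs T = phi cs (cs.simple i') * phi cs t' * phi cs (cs.simple i') := by
        rw [hT, map_mul, map_mul]
      rw [comp, Equiv.Perm.mul_apply, Equiv.Perm.mul_apply, e1, e2, e3]

lemma mem_rightInvSeq_of_isRightInversion {ω : List B} (_hω : cs.IsReduced ω) {t : W}
    (ht : cs.IsReflection t)
    (hl : cs.length (cs.wordProd ω * t) < cs.length (cs.wordProd ω)) :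
    t ∈ cs.rightInvSeq ω := by
  obtain ⟨ψ, hψred, hψ⟩ := cs.exists_reduced_word' (cs.wordProd ω * t)
  have hw : cs.wordProd ω = cs.wordProd ψ * t := by
    rw [← hψ, mul_assoc, ht.mul_self, mul_one]
  -- compute the sign of `phi (π ω) (t, 1)` in two ways
  have heven : Even ((cs.rightInvSeq ψ).count t) := by
    by_contra hodd
    have hmem : t ∈ cs.rightInvSeq ψ :=
      List.count_pos_iff.mp (Nat.pos_of_ne_zero (fun h0 => hodd (h0 ▸ Even.zero)))
    have := (cs.isRightInversion_of_mem_rightInvSeq hψred hmem).2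
    rw [← hψ, mul_assoc, ht.mul_self, mul_one] at this
    omega
  have h1 : phi cs (cs.wordProd ω) (t, 1) =
      (cs.wordProd ω * t * (cs.wordProd ω)⁻¹, (-1 : ℤˣ) ^ ((cs.rightInvSeq ω).count t) * 1) :=
    phi_apply_word cs ω t 1
  have h2 : phi cs (cs.wordProd ω) (t, 1) = (cs.wordProd ψ * t * (cs.wordProd ψ)⁻¹, -1) := by
    rw [hw, map_mul, Equiv.Perm.mul_apply, phi_refl_apply_self cs ht, phi_apply_word]
    rw [heven.neg_one_pow]
    simp
  rw [h1] at h2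
  have hsign : (-1 : ℤˣ) ^ ((cs.rightInvSeq ω).count t) * 1 = -1 :=
    congrArg Prod.snd h2
  rw [← List.count_pos_iff]
  rcases Nat.eq_zero_or_pos ((cs.rightInvSeq ω).count t) with h0 | h0
  · rw [h0, pow_zero, one_mul] at hsign
    exact absurd hsign (by decide)
  · exact h0

end CoxeterAux

/-- For any element `g` of a Coxeter group `(G,S)` with `S` finite, the word length of `g`
equals the number of reflections `t` with `ℓ(t·g) < ℓ(g)`. -/
theorem coxeter_length_eq_card_inversions {B W : Type*} [Finite B] [Group W]
    {M : CoxeterMatrix B} (cs : CoxeterSystem M W) (g : W) :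
    cs.length g =
      Set.ncard {t : W | cs.IsReflection t ∧ cs.length (t * g) < cs.length g} := by
  classical
  obtain ⟨ω, hred, hw⟩ := cs.exists_reduced_word' g⁻¹
  have hset : {t : W | cs.IsReflection t ∧ cs.length (t * g) < cs.length g} =
      ↑(cs.rightInvSeq ω).toFinset := by
    ext t
    simp only [Set.mem_setOf_eq, Finset.mem_coe, List.mem_toFinset]
    constructor
    · rintro ⟨h1, h2⟩
      have hinv : cs.IsRightInversion g⁻¹ t :=
        cs.isRightInversion_inv_iff.mpr ⟨h1, h2⟩
      apply CoxeterAux.mem_rightInvSeq_of_isRightInversion cs hred h1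
      rw [← hw]
      exact hinv.2
    · intro h
      have h2 := cs.isRightInversion_of_mem_rightInvSeq hred h
      rw [← hw] at h2
      exact cs.isRightInversion_inv_iff.mp h2
  rw [hset, Set.ncard_coe_finset, List.toFinset_card_of_nodup hred.nodup_rightInvSeq,
    cs.length_rightInvSeq ω]
  have h3 : cs.length (cs.wordProd ω) = ω.length := hred
  rw [← h3, ← hw, cs.length_inv]
end

section
/- For elements g, h of a Coxeter group (G,S), the word length of g⁻¹h equals the cardinality of the symmetric difference N_g △ N_h, where N_g = {t ∈ T : ℓ(tg) < ℓ(g)}. -/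
set_option linter.unusedSectionVars false

namespace CoxeterSystem

open List

variable {B W : Type*} [Group W] {M : CoxeterMatrix B} (cs : CoxeterSystem M W)

local prefix:100 "s" => cs.simple
local prefix:100 "π" => cs.wordProd
local prefix:100 "ℓ" => cs.length

private lemma zmod2_add_self (x : ZMod 2) : x + x = 0 := by revert x; decide

/-- Classical indicator function with values in `ZMod 2`. -/
noncomputable def chi (w v : W) : ZMod 2 := @ite _ (w = v) (Classical.dec _) 1 0

lemma chi_self (w : W) : chi w w = 1 := by rw [chi, if_pos rfl]

lemma chi_congr {w v w' v' : W} (h : w = v ↔ w' = v') : chi w v = chi w' v' := by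
  rw [chi, chi]
  split_ifs with h1 h2 h2
  · rfl
  · exact absurd (h.mp h1) h2
  · exact absurd (h.mpr h2) h1
  · rfl

lemma chi_add_chi (w v : W) : chi w v + chi w v = 0 := zmod2_add_self _

lemma chi_eq_zero_of_ne {w v : W} (h : w ≠ v) : chi w v = 0 := by rw [chi, if_neg h]

/-- conjugation equation solving -/
private lemma conj_eq_iff {G : Type*} [Group G] (a w x : G) :
    a * w * a⁻¹ = x ↔ w = a⁻¹ * x * a := by
  constructor
  · rintro rfl; group
  · rintro rfl; group

/-- The function underlying the generator of the parity representation. -/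
noncomputable def sigmaFun (i : B) : W × ZMod 2 → W × ZMod 2 :=
  fun x => (s i * x.1 * s i, x.2 + chi x.1 (s i))

lemma sigmaFun_invol (i : B) (x : W × ZMod 2) : cs.sigmaFun i (cs.sigmaFun i x) = x := by
  obtain ⟨w, ε⟩ := x
  simp only [sigmaFun]
  have h1 : s i * (s i * w * s i) * s i = w := by
    simp [mul_assoc, cs.simple_mul_simple_cancel_left, cs.simple_mul_simple_self]
  have h2 : chi (s i * w * s i) (s i) = chi w (s i) := by
    apply chi_congr
    have he : s i * w * s i = s i * w * (s i)⁻¹ := by rw [cs.inv_simple]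
    rw [he, conj_eq_iff]
    simp [cs.inv_simple, mul_assoc, cs.simple_mul_simple_cancel_left]
  rw [h1, h2, add_assoc, chi_add_chi, add_zero]

/-- The generator of the parity representation. -/
noncomputable def sigmaPerm (i : B) : Equiv.Perm (W × ZMod 2) :=
  ⟨cs.sigmaFun i, cs.sigmaFun i, cs.sigmaFun_invol i, cs.sigmaFun_invol i⟩

lemma sigmaPerm_apply (i : B) (w : W) (ε : ZMod 2) :
    cs.sigmaPerm i (w, ε) = (s i * w * s i, ε + chi w (s i)) := rfl

/-- `s_j p^k s_j = p^{-k}` where `p = s_i s_j`. -/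
lemma simple_conj_pow (i j : B) (k : ℕ) :
    s j * (s i * s j) ^ k * s j = ((s i * s j) ^ k)⁻¹ := by
  have h0 : s j * (s i * s j) * (s j)⁻¹ = (s i * s j)⁻¹ := by
    simp [mul_inv_rev, cs.inv_simple, mul_assoc, cs.simple_mul_simple_cancel_left,
      cs.simple_mul_simple_self]
  calc s j * (s i * s j) ^ k * s j
      = s j * (s i * s j) ^ k * (s j)⁻¹ := by rw [cs.inv_simple]
    _ = (s j * (s i * s j) * (s j)⁻¹) ^ k := (conj_pow ..).symm
    _ = ((s i * s j)⁻¹) ^ k := by rw [h0]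
    _ = ((s i * s j) ^ k)⁻¹ := by rw [inv_pow]

lemma inv_pow_conj_even (i j : B) (k : ℕ) :
    ((s i * s j) ^ k)⁻¹ * s j * (s i * s j) ^ k = s j * (s i * s j) ^ (2 * k) := by
  calc ((s i * s j) ^ k)⁻¹ * s j * (s i * s j) ^ k
      = (s j * (s i * s j) ^ k * s j) * s j * (s i * s j) ^ k := by
        rw [cs.simple_conj_pow]
    _ = s j * ((s i * s j) ^ k * (s i * s j) ^ k) := by
        simp [mul_assoc, cs.simple_mul_simple_cancel_left, cs.simple_mul_simple_self]
    _ = s j * (s i * s j) ^ (2 * k) := by rw [← pow_add, two_mul]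

lemma inv_pow_conj_odd (i j : B) (k : ℕ) :
    ((s i * s j) ^ k)⁻¹ * (s j * s i * s j) * (s i * s j) ^ k
      = s j * (s i * s j) ^ (2 * k + 1) := by
  calc ((s i * s j) ^ k)⁻¹ * (s j * s i * s j) * (s i * s j) ^ k
      = (s j * (s i * s j) ^ k * s j) * (s j * s i * s j) * (s i * s j) ^ k := by
        rw [cs.simple_conj_pow]
    _ = s j * ((s i * s j) ^ k * ((s i * s j) * (s i * s j) ^ k)) := by
        simp [mul_assoc, cs.simple_mul_simple_cancel_left, cs.simple_mul_simple_self]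
    _ = s j * (s i * s j) ^ (k + (k + 1)) := by rw [← pow_succ', ← pow_add]
    _ = s j * (s i * s j) ^ (2 * k + 1) := by rw [show k + (k + 1) = 2 * k + 1 by omega]


/-- `ZMod 2`-valued count of occurrences in a list. -/
noncomputable def zcount (w : W) : List W → ZMod 2
  | [] => 0
  | v :: l => chi w v + zcount w l

lemma zcount_eq_zero_of_not_mem {w : W} {l : List W} (h : w ∉ l) : zcount w l = 0 := by
  induction l with
  | nil => rfl
  | cons v l ih =>
    have h1 : w ≠ v := fun hh => h (hh ▸ List.mem_cons_self (a := v) (l := l))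
    have h2 : w ∉ l := fun hh => h (List.mem_cons_of_mem v hh)
    show chi w v + zcount w l = 0
    rw [chi_eq_zero_of_ne h1, ih h2, add_zero]

lemma chi_conj_even (i j : B) (k : ℕ) (w : W) :
    chi ((s i * s j) ^ k * w * ((s i * s j) ^ k)⁻¹) (s j)
      = chi w (s j * (s i * s j) ^ (2 * k)) := by
  apply chi_congr
  rw [conj_eq_iff, cs.inv_pow_conj_even]

lemma chi_conj_odd (i j : B) (k : ℕ) (w : W) :
    chi (s j * ((s i * s j) ^ k * w * ((s i * s j) ^ k)⁻¹) * s j) (s i)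
      = chi w (s j * (s i * s j) ^ (2 * k + 1)) := by
  apply chi_congr
  have h1 : s j * ((s i * s j) ^ k * w * ((s i * s j) ^ k)⁻¹) * s j = s i
      ↔ (s i * s j) ^ k * w * ((s i * s j) ^ k)⁻¹ = s j * s i * s j := by
    have he : s j * ((s i * s j) ^ k * w * ((s i * s j) ^ k)⁻¹) * s j
        = s j * ((s i * s j) ^ k * w * ((s i * s j) ^ k)⁻¹) * (s j)⁻¹ := by
      rw [cs.inv_simple]
    rw [he, conj_eq_iff, cs.inv_simple]
  rw [h1, conj_eq_iff, cs.inv_pow_conj_odd]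

lemma sigmaPerm_mul_pow_apply (i j : B) (k : ℕ) (w : W) (ε : ZMod 2) :
    ((cs.sigmaPerm i * cs.sigmaPerm j) ^ k) (w, ε) =
      ((s i * s j) ^ k * w * ((s i * s j) ^ k)⁻¹,
        ε + ∑ d ∈ Finset.range k,
          (chi w (s j * (s i * s j) ^ (2 * d)) + chi w (s j * (s i * s j) ^ (2 * d + 1)))) := by
  induction k with
  | zero => simp
  | succ k ih =>
    rw [pow_succ', Equiv.Perm.mul_apply, ih, Equiv.Perm.mul_apply, cs.sigmaPerm_apply,
      cs.sigmaPerm_apply, cs.chi_conj_even, cs.chi_conj_odd, Finset.sum_range_succ]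
    simp only [Prod.mk.injEq]
    constructor
    · simp [pow_succ', mul_assoc, mul_inv_rev, cs.inv_simple]
    · rw [add_assoc, add_assoc]

private lemma sum_pair_eq_sum_double (f : ℕ → ZMod 2) (m : ℕ) :
    ∑ d ∈ Finset.range m, (f (2 * d) + f (2 * d + 1)) = ∑ e ∈ Finset.range (2 * m), f e := by
  induction m with
  | zero => simp
  | succ m ih =>
    rw [Finset.sum_range_succ, ih, show 2 * (m + 1) = (2 * m + 1) + 1 by ring,
      Finset.sum_range_succ, Finset.sum_range_succ, add_assoc]

lemma isLiftable_sigmaPerm : M.IsLiftable cs.sigmaPerm := by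
  intro i j
  apply Equiv.ext
  rintro ⟨w, ε⟩
  have hp : (s i * s j) ^ M i j = 1 := cs.simple_mul_simple_pow i j
  rw [cs.sigmaPerm_mul_pow_apply, hp]
  have hS : ∑ d ∈ Finset.range (M i j),
      (chi w (s j * (s i * s j) ^ (2 * d)) + chi w (s j * (s i * s j) ^ (2 * d + 1))) = 0 := by
    rw [sum_pair_eq_sum_double (fun e => chi w (s j * (s i * s j) ^ e)) (M i j), two_mul,
      Finset.sum_range_add]
    have : ∀ e ∈ Finset.range (M i j),
        chi w (s j * (s i * s j) ^ (M i j + e)) = chi w (s j * (s i * s j) ^ e) := by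
      intro e _
      rw [pow_add, hp, one_mul]
    rw [Finset.sum_congr rfl this, zmod2_add_self]
  rw [hS, add_zero, one_mul, inv_one, mul_one]
  rfl

/-- The parity (reflection) representation of a Coxeter group. -/
noncomputable def parityRep : W →* Equiv.Perm (W × ZMod 2) :=
  cs.lift ⟨cs.sigmaPerm, cs.isLiftable_sigmaPerm⟩

lemma parityRep_simple (i : B) : cs.parityRep (s i) = cs.sigmaPerm i :=
  cs.lift_apply_simple cs.isLiftable_sigmaPerm i

lemma parityRep_wordProd (ω : List B) (w : W) (ε : ZMod 2) :
    cs.parityRep (π ω) (w, ε)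
      = (π ω * w * (π ω)⁻¹, ε + zcount w (cs.rightInvSeq ω)) := by
  induction ω with
  | nil => simp [zcount]
  | cons i ω ih =>
    rw [wordProd_cons, map_mul, Equiv.Perm.mul_apply, ih, cs.parityRep_simple,
      cs.sigmaPerm_apply]
    have hris : cs.rightInvSeq (i :: ω) = ((π ω)⁻¹ * s i * π ω) :: cs.rightInvSeq ω := rfl
    rw [hris]
    simp only [Prod.mk.injEq]
    constructor
    · simp [mul_assoc, mul_inv_rev, cs.inv_simple]
    · show ε + zcount w (cs.rightInvSeq ω) + chi (π ω * w * (π ω)⁻¹) (s i)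
        = ε + (chi w ((π ω)⁻¹ * s i * π ω) + zcount w (cs.rightInvSeq ω))
      rw [chi_congr (conj_eq_iff (π ω) w (s i))]
      ring


/-- The parity cocycle: `flips v t = 1` iff `t` is a right inversion of `v` (for reflections). -/
noncomputable def flips (v t : W) : ZMod 2 := (cs.parityRep v (t, 0)).2

lemma flips_wordProd (ω : List B) (t : W) :
    cs.flips (π ω) t = zcount t (cs.rightInvSeq ω) := by
  show (cs.parityRep (π ω) (t, 0)).2 = _
  rw [cs.parityRep_wordProd, zero_add]

lemma parityRep_apply (v w : W) (ε : ZMod 2) :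
    cs.parityRep v (w, ε) = (v * w * v⁻¹, ε + cs.flips v w) := by
  obtain ⟨ω, rfl⟩ := cs.wordProd_surjective v
  rw [cs.parityRep_wordProd, cs.flips_wordProd]

lemma flips_mul (u v w : W) :
    cs.flips (u * v) w = cs.flips v w + cs.flips u (v * w * v⁻¹) := by
  show (cs.parityRep (u * v) (w, 0)).2 = _
  rw [map_mul, Equiv.Perm.mul_apply, cs.parityRep_apply v w 0, cs.parityRep_apply, zero_add]

lemma flips_simple (i : B) (w : W) : cs.flips (s i) w = chi w (s i) := by
  show (cs.parityRep (s i) (w, 0)).2 = _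
  rw [cs.parityRep_simple, cs.sigmaPerm_apply, zero_add]

lemma flips_self_conj (ω : List B) (i : B) :
    cs.flips (π ω * s i * (π ω)⁻¹) (π ω * s i * (π ω)⁻¹) = 1 := by
  induction ω generalizing i with
  | nil => simp [cs.flips_simple, chi_self]
  | cons j ω ih =>
    have hu : π (j :: ω) * s i * (π (j :: ω))⁻¹
        = s j * ((π ω * s i * (π ω)⁻¹) * s j) := by
      rw [wordProd_cons]
      simp [mul_assoc, mul_inv_rev, cs.inv_simple]
    set t' := π ω * s i * (π ω)⁻¹ with ht'
    have htt' : t' * t' = 1 := by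
      rw [ht']
      simp [mul_assoc, cs.simple_mul_simple_cancel_left, cs.simple_mul_simple_self]
    have ht'inv2 : t'⁻¹ = t' := by
      rw [inv_eq_iff_mul_eq_one]; exact htt'
    rw [hu, cs.flips_mul (s j) (t' * s j)]
    have hcancel : ∀ x : W, t' * (t' * x) = x := by
      intro x
      rw [← mul_assoc, htt', one_mul]
    have h2 : (t' * s j) * (s j * (t' * s j)) * (t' * s j)⁻¹ = t' := by
      rw [mul_inv_rev, cs.inv_simple, ht'inv2]
      simp [mul_assoc, cs.simple_mul_simple_cancel_left, hcancel, htt']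
    rw [h2, cs.flips_mul t' (s j)]
    have h3 : s j * (s j * (t' * s j)) * (s j)⁻¹ = t' := by
      rw [cs.inv_simple]
      simp [mul_assoc, cs.simple_mul_simple_cancel_left, cs.simple_mul_simple_self]
    rw [h3, cs.flips_simple, cs.flips_simple, ih i]
    have h4 : chi (s j * (t' * s j)) (s j) = chi t' (s j) := by
      apply chi_congr
      constructor
      · intro hh
        have h5 : t' * s j = 1 := by
          have := congrArg (fun y => s j * y) hh
          simpa [mul_assoc, cs.simple_mul_simple_cancel_left] using this
        calc t' = (s j)⁻¹ := eq_inv_of_mul_eq_one_left h5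
          _ = s j := cs.inv_simple j
      · intro hh
        rw [hh]
        simp [mul_assoc, cs.simple_mul_simple_cancel_left, cs.simple_mul_simple_self]
    rw [h4]
    have hx := zmod2_add_self (chi t' (s j))
    linear_combination hx

lemma flips_self {t : W} (ht : cs.IsReflection t) : cs.flips t t = 1 := by
  obtain ⟨u, i, rfl⟩ := ht
  obtain ⟨ω, rfl⟩ := cs.wordProd_surjective u
  exact cs.flips_self_conj ω i

set_option linter.unusedVariables false in
lemma isRightInversion_of_flips {w t : W} (ht : cs.IsReflection t) (h : cs.flips w t = 1) :
    cs.IsRightInversion w t := by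
  obtain ⟨ω, hred, rfl⟩ := cs.exists_reduced_word' w
  rw [cs.flips_wordProd] at h
  have hmem : t ∈ cs.rightInvSeq ω := by
    by_contra hmem
    rw [zcount_eq_zero_of_not_mem hmem] at h
    exact absurd h (by decide)
  exact cs.isRightInversion_of_mem_rightInvSeq hred hmem

private lemma zmod2_eq_zero_of_ne_one {x : ZMod 2} (h : x ≠ 1) : x = 0 := by
  revert x; decide

lemma flips_eq_one_iff {w t : W} (ht : cs.IsReflection t) :
    cs.flips w t = 1 ↔ ℓ (w * t) < ℓ w := by
  constructor
  · intro h
    exact (cs.isRightInversion_of_flips ht h).2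
  · intro h
    have key : cs.flips (w * t * t) t = cs.flips t t + cs.flips (w * t) (t * t * t⁻¹) :=
      cs.flips_mul (w * t) t t
    rw [ht.mul_self, one_mul, ht.inv, cs.flips_self ht] at key
    rw [mul_assoc, ht.mul_self, mul_one] at key
    have h0 : cs.flips (w * t) t = 0 := by
      apply zmod2_eq_zero_of_ne_one
      intro h1
      have h2 := (cs.isRightInversion_of_flips ht h1).2
      rw [mul_assoc, ht.mul_self, mul_one] at h2
      omega
    rw [key, h0, add_zero]

lemma ncard_rightInversions (w : W) : {t | cs.IsRightInversion w t}.ncard = ℓ w := by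
  classical
  obtain ⟨ω, hred, rfl⟩ := cs.exists_reduced_word' w
  have hset : {t | cs.IsRightInversion (π ω) t} = ((cs.rightInvSeq ω).toFinset : Set W) := by
    ext t
    simp only [Set.mem_setOf_eq, List.coe_toFinset]
    constructor
    · intro h
      have h1 : cs.flips (π ω) t = 1 := (cs.flips_eq_one_iff h.1).2 h.2
      rw [cs.flips_wordProd] at h1
      by_contra hmem
      rw [zcount_eq_zero_of_not_mem hmem] at h1
      exact absurd h1 (by decide)
    · exact fun h => cs.isRightInversion_of_mem_rightInvSeq hred h
  rw [hset, Set.ncard_coe_finset, List.toFinset_card_of_nodup hred.nodup_rightInvSeq,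
    cs.length_rightInvSeq]
  exact hred.symm

end CoxeterSystem

/-- For `g, h` in a Coxeter group, `ℓ(g⁻¹h) = |N_g △ N_h|` where
`N_g = {t ∈ T : ℓ(tg) < ℓ(g)}`. -/
theorem coxeter_length_eq_ncard_symmDiff {B W : Type*} [Finite B] [Group W]
    {M : CoxeterMatrix B} (cs : CoxeterSystem M W) (g h : W) :
    cs.length (g⁻¹ * h) =
      Set.ncard
        (symmDiff {t : W | cs.IsReflection t ∧ cs.length (t * g) < cs.length g}
          {t : W | cs.IsReflection t ∧ cs.length (t * h) < cs.length h}) := by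
  classical
  have hNg : {t : W | cs.IsReflection t ∧ cs.length (t * g) < cs.length g}
      = {t | cs.IsRightInversion g⁻¹ t} := by
    ext t
    exact (cs.isRightInversion_inv_iff (w := g) (t := t)).symm
  have hNh : {t : W | cs.IsReflection t ∧ cs.length (t * h) < cs.length h}
      = {t | cs.IsRightInversion h⁻¹ t} := by
    ext t
    exact (cs.isRightInversion_inv_iff (w := h) (t := t)).symm
  rw [hNg, hNh]
  have key : symmDiff {t | cs.IsRightInversion g⁻¹ t} {t | cs.IsRightInversion h⁻¹ t}
      = (fun x => g * x * g⁻¹) '' {t | cs.IsRightInversion (h⁻¹ * g) t} := by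
    ext t
    rw [Set.mem_symmDiff]
    by_cases htr : cs.IsReflection t
    · have hconj : cs.IsReflection (g⁻¹ * t * g) := by
        have := htr.conj g⁻¹
        rwa [inv_inv] at this
      have hfb : cs.flips h⁻¹ t = cs.flips g⁻¹ t + cs.flips (h⁻¹ * g) (g⁻¹ * t * g) := by
        have hh : h⁻¹ = h⁻¹ * g * g⁻¹ := by group
        conv_lhs => rw [hh]
        rw [cs.flips_mul, inv_inv]
      have e1 : cs.IsRightInversion g⁻¹ t ↔ cs.flips g⁻¹ t = 1 :=
        ⟨fun hh => (cs.flips_eq_one_iff htr).2 hh.2,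
          fun hh => cs.isRightInversion_of_flips htr hh⟩
      have e2 : cs.IsRightInversion h⁻¹ t ↔ cs.flips h⁻¹ t = 1 :=
        ⟨fun hh => (cs.flips_eq_one_iff htr).2 hh.2,
          fun hh => cs.isRightInversion_of_flips htr hh⟩
      have e3 : cs.IsRightInversion (h⁻¹ * g) (g⁻¹ * t * g)
          ↔ cs.flips (h⁻¹ * g) (g⁻¹ * t * g) = 1 :=
        ⟨fun hh => (cs.flips_eq_one_iff hconj).2 hh.2,
          fun hh => cs.isRightInversion_of_flips hconj hh⟩
      simp only [Set.mem_setOf_eq, Set.mem_image]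
      constructor
      · intro hmem
        refine ⟨g⁻¹ * t * g, ?_, by group⟩
        refine e3.2 ((by decide :
          ∀ x z : ZMod 2, ((x = 1 ∧ ¬(x + z) = 1) ∨ ((x + z) = 1 ∧ ¬x = 1)) → z = 1)
          (cs.flips g⁻¹ t) (cs.flips (h⁻¹ * g) (g⁻¹ * t * g)) ?_)
        rcases hmem with ⟨h1, h2⟩ | ⟨h1, h2⟩
        · exact Or.inl ⟨e1.1 h1, fun hc => h2 (e2.2 (hfb.trans hc))⟩
        · exact Or.inr ⟨(hfb.symm.trans (e2.1 h1)), fun hc => h2 (e1.2 hc)⟩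
      · rintro ⟨x, hx, rfl⟩
        have hxx : g⁻¹ * (g * x * g⁻¹) * g = x := by group
        rw [hxx] at e3 hfb
        have hz1 : cs.flips (h⁻¹ * g) x = 1 := e3.1 hx
        have hz2 := (by decide :
          ∀ a c : ZMod 2, c = 1 → ((a = 1 ∧ ¬(a + c) = 1) ∨ ((a + c) = 1 ∧ ¬a = 1)))
          (cs.flips g⁻¹ (g * x * g⁻¹)) (cs.flips (h⁻¹ * g) x) hz1
        rcases hz2 with ⟨h1, h2⟩ | ⟨h1, h2⟩
        · exact Or.inl ⟨e1.2 h1, fun hc => h2 (hfb.symm.trans (e2.1 hc))⟩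
        · exact Or.inr ⟨e2.2 (hfb.trans h1), fun hc => h2 (e1.1 hc)⟩
    · simp only [Set.mem_setOf_eq, Set.mem_image]
      constructor
      · rintro (⟨⟨h1, _⟩, _⟩ | ⟨⟨h1, _⟩, _⟩) <;> exact absurd h1 htr
      · rintro ⟨x, hx, rfl⟩
        exact absurd (hx.1.conj g) htr
  have hinj : Function.Injective (fun x : W => g * x * g⁻¹) := by
    intro a b hab
    simp only at hab
    exact mul_left_cancel (mul_right_cancel hab)
  rw [key, Set.ncard_image_of_injective _ hinj, cs.ncard_rightInversions]
  have hinv : (g⁻¹ * h)⁻¹ = h⁻¹ * g := by group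
  rw [← hinv, cs.length_inv]
end
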